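/- For p = 1, the transport–transform distance τ(ξ,η) between finite point patterns ξ and η equals the minimum total cost over all finite sequences of elementary operations transforming ξ into η, where each elementary operation either adds a point (cost C), deletes a point (cost C), or moves a point from location x to location y (cost d(x,y)). -/

import Mathlib

/-- `p`-th power of the transport-transform distance between finite point patterns. -/
noncomputable def ttP {X : Type*} [MetricSpace X] (C p : ℝ) (ξ η : Multiset X) : ℝ :=
  sInf { c : ℝ | ∃ γ : Multiset (X × X),
    γ.map Prod.fst ≤ ξ ∧ γ.map Prod.snd ≤ η ∧
    c = ((Multiset.card ξ : ℝ) + Multiset.card η - 2 * Multiset.card γ) * C ^ p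
        + (γ.map (fun z => dist z.1 z.2 ^ p)).sum }

/-- The transport-transform (TT) distance `τ_{C,p}`. -/
noncomputable def ttDist {X : Type*} [MetricSpace X] (C p : ℝ) (ξ η : Multiset X) : ℝ :=
  ttP C p ξ η ^ (1 / p)

/-- An elementary operation transforming `ξ` into `η` at cost `c`: add a point (cost `C`),
delete a point (cost `C`), or move a point from `x` to `y` (cost `d(x,y)`). -/
def elemStep {X : Type*} [MetricSpace X] (C : ℝ) (ξ η : Multiset X) (c : ℝ) : Prop :=
  (∃ y, η = y ::ₘ ξ ∧ c = C) ∨ (∃ x, ξ = x ::ₘ η ∧ c = C) ∨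
  (∃ x y ρ, ξ = x ::ₘ ρ ∧ η = y ::ₘ ρ ∧ c = dist x y)

/-!
A partial matching `γ` of `ξ` with `η` is realised by a chain of the same cost: move each matched
point onto its partner, delete the unmatched points of `ξ` and add the unmatched points of `η`.
Conversely, a partial matching can be pulled back along a chain one step at a time without its
cost growing by more than the cost of the step: a deleted or added point costs `C` and can at
worst unmatch one pair, which saves `2C`, while a moved point keeps its partner, and by the
triangle inequality the new pair costs at most the old one plus the cost of the move. Since the
identity matching of `η` with itself costs nothing, every chain costs at least some matching, and
the two infima agree.
-/

namespace TransportTransform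

variable {X : Type*} [MetricSpace X]

def IsPartialMatching {α β : Type*} (ξ : Multiset α) (η : Multiset β)
    (γ : Multiset (α × β)) : Prop :=
  γ.map Prod.fst ≤ ξ ∧ γ.map Prod.snd ≤ η

theorem isPartialMatching_diagonal {α : Type*} (ξ : Multiset α) :
    IsPartialMatching ξ ξ (ξ.map fun x => (x, x)) := by
  simp [IsPartialMatching]

/-- `card ξ + card η - 2 * card γ` is the number of unmatched points. -/
noncomputable def matchingCost (C : ℝ) (ξ η : Multiset X) (γ : Multiset (X × X)) : ℝ :=
  ((Multiset.card ξ : ℝ) + Multiset.card η - 2 * Multiset.card γ) * C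
    + (γ.map fun z => dist z.1 z.2).sum

def chainCosts (C : ℝ) (ξ η : Multiset X) : Set ℝ :=
  { c : ℝ | ∃ (N : ℕ) (f : Fin (N + 1) → Multiset X) (w : Fin N → ℝ),
      f 0 = ξ ∧ f (Fin.last N) = η ∧
      (∀ i : Fin N, elemStep C (f i.castSucc) (f i.succ) (w i)) ∧
      c = ∑ i, w i }

theorem ttDist_one (C : ℝ) (ξ η : Multiset X) :
    ttDist C 1 ξ η = sInf (matchingCost C ξ η '' {γ | IsPartialMatching ξ η γ}) := by
  rw [ttDist, div_one, Real.rpow_one, ttP]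
  congr 1
  ext c
  simp only [Real.rpow_one, Set.mem_image, Set.mem_ofPred_eq, IsPartialMatching, matchingCost,
    and_assoc, eq_comm]

section matchingCost

variable (C : ℝ) (ξ η : Multiset X) (γ : Multiset (X × X))

theorem matchingCost_zero : matchingCost C ξ η 0 = (Multiset.card ξ + Multiset.card η) * C := by
  simp [matchingCost]

theorem matchingCost_cons_left (a : X) :
    matchingCost C (a ::ₘ ξ) η γ = matchingCost C ξ η γ + C := by
  simp only [matchingCost, Multiset.card_cons]
  push_cast
  ring

theorem matchingCost_cons_right (b : X) :
    matchingCost C ξ (b ::ₘ η) γ = matchingCost C ξ η γ + C := by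
  simp only [matchingCost, Multiset.card_cons]
  push_cast
  ring

theorem matchingCost_cons (z : X × X) :
    matchingCost C ξ η (z ::ₘ γ) = matchingCost C ξ η γ - 2 * C + dist z.1 z.2 := by
  simp only [matchingCost, Multiset.card_cons, Multiset.map_cons, Multiset.sum_cons]
  push_cast
  ring

theorem matchingCost_diagonal : matchingCost C ξ ξ (ξ.map fun x => (x, x)) = 0 := by
  simp [matchingCost, two_mul]

end matchingCost

section chainCosts

variable {C : ℝ}

theorem zero_mem_chainCosts (ξ : Multiset X) : 0 ∈ chainCosts C ξ ξ :=
  ⟨0, fun _ => ξ, fun _ => 0, rfl, rfl, fun i => i.elim0, by simp⟩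

theorem add_mem_chainCosts_of_elemStep {ξ ρ η : Multiset X} {c b : ℝ}
    (hs : elemStep C ξ ρ c) (hb : b ∈ chainCosts C ρ η) : c + b ∈ chainCosts C ξ η := by
  obtain ⟨N, f, w, rfl, hl, hstep, rfl⟩ := hb
  refine ⟨N + 1, Fin.cons ξ f, Fin.cons c w, rfl, hl, fun i => Fin.cases hs (fun j => ?_) i,
    (Fin.sum_cons c w).symm⟩
  simpa [← Fin.succ_castSucc] using hstep j

theorem elemStep_cons {s t : Multiset X} {c : ℝ} (a : X) (h : elemStep C s t c) :
    elemStep C (a ::ₘ s) (a ::ₘ t) c := by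
  rcases h with ⟨y, rfl, rfl⟩ | ⟨x, rfl, rfl⟩ | ⟨x, y, ρ, rfl, rfl, rfl⟩
  · exact Or.inl ⟨y, Multiset.cons_swap _ _ _, rfl⟩
  · exact Or.inr (Or.inl ⟨x, Multiset.cons_swap _ _ _, rfl⟩)
  · exact Or.inr (Or.inr
      ⟨x, y, a ::ₘ ρ, Multiset.cons_swap _ _ _, Multiset.cons_swap _ _ _, rfl⟩)

theorem mem_chainCosts_cons {ξ η : Multiset X} {b : ℝ} (a : X) (hb : b ∈ chainCosts C ξ η) :
    b ∈ chainCosts C (a ::ₘ ξ) (a ::ₘ η) := by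
  obtain ⟨N, f, w, rfl, rfl, hstep, rfl⟩ := hb
  exact ⟨N, fun i => a ::ₘ f i, w, rfl, rfl, fun i => elemStep_cons a (hstep i), rfl⟩

theorem card_mul_mem_chainCosts_zero (η : Multiset X) :
    Multiset.card η * C ∈ chainCosts C 0 η := by
  induction η using Multiset.induction with
  | empty => simpa using zero_mem_chainCosts (C := C) (0 : Multiset X)
  | cons y η ih =>
    have hadd : elemStep C 0 {y} C := Or.inl ⟨y, rfl, rfl⟩
    convert add_mem_chainCosts_of_elemStep hadd (mem_chainCosts_cons y ih) using 1
    simp only [Multiset.card_cons]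
    push_cast
    ring

theorem card_add_card_mul_mem_chainCosts (ξ η : Multiset X) :
    (Multiset.card ξ + Multiset.card η) * C ∈ chainCosts C ξ η := by
  induction ξ using Multiset.induction with
  | empty => simpa using card_mul_mem_chainCosts_zero η
  | cons x ξ ih =>
    have hdel : elemStep C (x ::ₘ ξ) ξ C := Or.inr (Or.inl ⟨x, rfl, rfl⟩)
    convert add_mem_chainCosts_of_elemStep hdel ih using 1
    simp only [Multiset.card_cons]
    push_cast
    ring

theorem matchingCost_mem_chainCosts {γ : Multiset (X × X)} :
    ∀ {ξ η : Multiset X}, IsPartialMatching ξ η γ →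
      matchingCost C ξ η γ ∈ chainCosts C ξ η := by
  induction γ using Multiset.induction with
  | empty =>
    intro ξ η _
    rw [matchingCost_zero]
    exact card_add_card_mul_mem_chainCosts ξ η
  | cons z γ ih =>
    rintro ξ η ⟨hξ, hη⟩
    rw [Multiset.map_cons] at hξ hη
    obtain ⟨ξ', rfl⟩ :=
      Multiset.exists_cons_of_mem (Multiset.mem_of_le hξ (Multiset.mem_cons_self _ _))
    obtain ⟨η', rfl⟩ :=
      Multiset.exists_cons_of_mem (Multiset.mem_of_le hη (Multiset.mem_cons_self _ _))
    rw [Multiset.cons_le_cons_iff] at hξ hη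
    have hmove : elemStep C (z.1 ::ₘ ξ') (z.2 ::ₘ ξ') (dist z.1 z.2) :=
      Or.inr (Or.inr ⟨z.1, z.2, ξ', rfl, rfl, rfl⟩)
    convert add_mem_chainCosts_of_elemStep hmove
      (mem_chainCosts_cons z.2 (ih ⟨hξ, hη⟩)) using 1
    rw [matchingCost_cons, matchingCost_cons_left, matchingCost_cons_right]
    ring

end chainCosts

theorem map_fst_le_cons_cases {α β : Type*} {γ : Multiset (α × β)} {ρ : Multiset α} {y : α}
    (h : γ.map Prod.fst ≤ y ::ₘ ρ) :
    γ.map Prod.fst ≤ ρ ∨ ∃ z γ', γ = (y, z) ::ₘ γ' ∧ γ'.map Prod.fst ≤ ρ := by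
  by_cases hy : y ∈ γ.map Prod.fst
  · obtain ⟨⟨_, z⟩, hz, rfl⟩ := Multiset.mem_map.mp hy
    obtain ⟨γ', rfl⟩ := Multiset.exists_cons_of_mem hz
    rw [Multiset.map_cons, Multiset.cons_le_cons_iff] at h
    exact Or.inr ⟨z, γ', rfl, h⟩
  · exact Or.inl ((Multiset.le_cons_of_notMem hy).mp h)

theorem IsPartialMatching.exists_le_of_elemStep {C c : ℝ} (hC : 0 ≤ C) {ξ ξ' η : Multiset X}
    {γ' : Multiset (X × X)} (hs : elemStep C ξ ξ' c) (hγ' : IsPartialMatching ξ' η γ') :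
    ∃ γ, IsPartialMatching ξ η γ ∧
      matchingCost C ξ η γ ≤ c + matchingCost C ξ' η γ' := by
  obtain ⟨hfst, hsnd⟩ := hγ'
  rcases hs with ⟨y, rfl, rfl⟩ | ⟨x, rfl, rfl⟩ | ⟨x, y, ρ, rfl, rfl, rfl⟩
  · rcases map_fst_le_cons_cases hfst with hfst | ⟨z, γ, rfl, hρ⟩
    · refine ⟨γ', ⟨hfst, hsnd⟩, ?_⟩
      rw [matchingCost_cons_left]
      linarith
    · refine ⟨γ, ⟨hρ, (Multiset.map_le_map (Multiset.le_cons_self _ _)).trans hsnd⟩, ?_⟩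
      rw [matchingCost_cons_left, matchingCost_cons]
      linarith [dist_nonneg (x := y) (y := z)]
  · refine ⟨γ', ⟨hfst.trans (Multiset.le_cons_self _ _), hsnd⟩, ?_⟩
    rw [matchingCost_cons_left]
    linarith
  · rcases map_fst_le_cons_cases hfst with hfst | ⟨z, γ, rfl, hρ⟩
    · refine ⟨γ', ⟨hfst.trans (Multiset.le_cons_self _ _), hsnd⟩, ?_⟩
      rw [matchingCost_cons_left, matchingCost_cons_left]
      linarith [dist_nonneg (x := x) (y := y)]
    · refine ⟨(x, z) ::ₘ γ, ⟨?_, by simpa using hsnd⟩, ?_⟩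
      · simpa using hρ
      · rw [matchingCost_cons_left, matchingCost_cons_left, matchingCost_cons, matchingCost_cons]
        linarith [dist_triangle x y z]

theorem exists_matchingCost_le_of_mem_chainCosts {C b : ℝ} (hC : 0 ≤ C) {ξ η : Multiset X}
    (hb : b ∈ chainCosts C ξ η) :
    ∃ γ, IsPartialMatching ξ η γ ∧ matchingCost C ξ η γ ≤ b := by
  obtain ⟨N, f, w, rfl, rfl, hstep, rfl⟩ := hb
  induction N with
  | zero =>
    exact ⟨_, isPartialMatching_diagonal _, (matchingCost_diagonal C _).le.trans (by simp)⟩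
  | succ N ih =>
    obtain ⟨γ', hγ', hle⟩ := ih (f ∘ Fin.succ) (w ∘ Fin.succ)
      fun i => by simpa [← Fin.succ_castSucc] using hstep i.succ
    simp only [Function.comp_apply, Fin.succ_last, Nat.succ_eq_add_one] at hγ' hle
    obtain ⟨γ, hγ, hle'⟩ := hγ'.exists_le_of_elemStep hC (hstep 0)
    simp only [Fin.castSucc_zero] at hγ hle'
    refine ⟨γ, hγ, ?_⟩
    rw [Fin.sum_univ_succ]
    linarith

end TransportTransform

/-- For `p = 1`, the TT-distance equals the minimal total cost over all finite sequences of
elementary add/delete/move operations transforming `ξ` into `η` (the spike time metric). -/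
theorem stmt5 {X : Type*} [MetricSpace X] (C : ℝ) (hC : 0 < C) (ξ η : Multiset X) :
    ttDist C 1 ξ η =
    sInf { c : ℝ | ∃ (N : ℕ) (f : Fin (N + 1) → Multiset X) (w : Fin N → ℝ),
      f 0 = ξ ∧ f (Fin.last N) = η ∧
      (∀ i : Fin N, elemStep C (f i.castSucc) (f i.succ) (w i)) ∧
      c = ∑ i, w i } := by
  rw [TransportTransform.ttDist_one]
  refine csInf_eq_csInf_of_forall_exists_le ?_ fun b hb => ?_
  · rintro _ ⟨γ, hγ, rfl⟩
    exact ⟨_, TransportTransform.matchingCost_mem_chainCosts hγ, le_rfl⟩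
  · obtain ⟨γ, hγ, hle⟩ :=
      TransportTransform.exists_matchingCost_le_of_mem_chainCosts hC.le hb
    exact ⟨_, ⟨γ, hγ, rfl⟩, hle⟩
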